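/- Let k > 0 and let f, g : [0, k] → ℝ be twice continuously differentiable with f'(s)² + g'(s)² = 1 for all s ∈ [0, k]. Then for every t ∈ (−1, 1) and every s ∈ [0, k], the T-deformed curve p_t satisfies ‖p_t''(s)‖² = t²·f''(s)² / ((1−t²)·f'(s)² + g'(s)²); note that the denominator (1−t²)·f'(s)² + g'(s)² is strictly positive for |t| < 1. Since p_t is parametrized by arc length, this gives the squared unsigned curvature of the deformed profile curve. -/

import Mathlib

/-- The isometric deformation of T-type of a planar profile curve
`s ↦ (f s, g s)` with deformation parameter `t`, as a curve in the Euclidean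
plane (modelled as `WithLp 2 (ℝ × ℝ)` so that `‖·‖` is the Euclidean norm). -/
noncomputable def Tdeform (f g : ℝ → ℝ) (t : ℝ) : ℝ → WithLp 2 (ℝ × ℝ) :=
  fun s => (WithLp.equiv 2 (ℝ × ℝ)).symm
    (t * f s,
      ∫ u in (0 : ℝ)..s,
        Real.sqrt ((1 - t ^ 2) * deriv f u ^ 2 + deriv g u ^ 2))

/-!
The T-deformed curve has velocity `p_t' = (t f', √c)` with `c = (1 - t²) f'² + g'²`, so
`p_t'' = (t f'', ((1 - t²) f' f'' + g' g'') / √c)`. Differentiating `f'² + g'² = 1` gives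
`f' f'' + g' g'' = 0` on `(0, k)`, and by continuity on `[0, k]`; hence the second component is
`-t² f' f'' / √c` and `‖p_t''‖² = t² f''² (c + t² f'²) / c = t² f''² / c`, because
`c + t² f'² = 1`.
-/

open Real Set Filter Topology

theorem HasDerivAt.toLp_prodMk {p : ENNReal} [Fact (1 ≤ p)] {E F : Type*}
    [NormedAddCommGroup E] [NormedSpace ℝ E] [NormedAddCommGroup F] [NormedSpace ℝ F]
    {u : ℝ → E} {v : ℝ → F} {u' : E} {v' : F} {s : ℝ}
    (hu : HasDerivAt u u' s) (hv : HasDerivAt v v' s) :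
    HasDerivAt (fun x => WithLp.toLp p (u x, v x)) (WithLp.toLp p (u', v')) s :=
  (WithLp.prodContinuousLinearEquiv p ℝ E F).symm.hasFDerivAt.comp_hasDerivAt s (hu.prodMk hv)

theorem eqOn_deriv_zero_of_eqOn_const_Icc {F : Type*} [NormedAddCommGroup F] [NormedSpace ℝ F]
    {φ : ℝ → F} {a b : ℝ} {C : F} (hab : a < b)
    (hφ' : Continuous (deriv φ)) (hφ : EqOn φ (fun _ => C) (Icc a b)) :
    EqOn (deriv φ) 0 (Icc a b) := by
  have hIoo : EqOn (deriv φ) 0 (Ioo a b) := fun s hs => by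
    have hloc : φ =ᶠ[𝓝 s] fun _ => C :=
      eventually_of_mem (Ioo_mem_nhds hs.1 hs.2) fun u hu => hφ (Ioo_subset_Icc_self hu)
    simpa using hloc.deriv_eq
  simpa [closure_Ioo hab.ne] using hIoo.closure hφ' continuous_const

theorem mul_deriv_add_mul_deriv_eq_zero {u v : ℝ → ℝ} {a b r : ℝ} (hab : a < b)
    (hu : ContDiff ℝ 1 u) (hv : ContDiff ℝ 1 v)
    (huv : ∀ s ∈ Icc a b, u s ^ 2 + v s ^ 2 = r) :
    ∀ s ∈ Icc a b, u s * deriv u s + v s * deriv v s = 0 := by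
  have hderiv : deriv (fun s => u s ^ 2 + v s ^ 2) =
      fun s => 2 * (u s * deriv u s + v s * deriv v s) := by
    funext s
    refine (((hu.differentiable one_ne_zero s).hasDerivAt.pow 2).add
      ((hv.differentiable one_ne_zero s).hasDerivAt.pow 2)).deriv.trans ?_
    push_cast
    ring
  have hcont : Continuous (deriv fun s => u s ^ 2 + v s ^ 2) := by
    rw [hderiv]
    have := hu.continuous_deriv le_rfl
    have := hv.continuous_deriv le_rfl
    fun_prop
  intro s hs
  simpa [hderiv] using eqOn_deriv_zero_of_eqOn_const_Icc hab hcont huv hs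

theorem one_sub_sq_mul_sq_add_sq_pos {t a b : ℝ} (ht : t ^ 2 < 1) (hab : a ^ 2 + b ^ 2 = 1) :
    0 < (1 - t ^ 2) * a ^ 2 + b ^ 2 := by
  nlinarith [sq_nonneg a, sq_nonneg b, mul_nonneg (sq_nonneg t) (sq_nonneg b)]

theorem hasDerivAt_Tdeform {f g : ℝ → ℝ} (hf : Differentiable ℝ f)
    (hf' : Continuous (deriv f)) (hg' : Continuous (deriv g)) (t s : ℝ) :
    HasDerivAt (Tdeform f g t)
      (WithLp.toLp 2 (t * deriv f s, √((1 - t ^ 2) * deriv f s ^ 2 + deriv g s ^ 2))) s := by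
  have hc : Continuous fun u => √((1 - t ^ 2) * deriv f u ^ 2 + deriv g u ^ 2) := by fun_prop
  exact ((hf s).hasDerivAt.const_mul t).toLp_prodMk
    (intervalIntegral.integral_hasDerivAt_right (hc.intervalIntegrable 0 s)
      (hc.stronglyMeasurableAtFilter _ _) hc.continuousAt)

theorem hasDerivAt_deriv_Tdeform {f g : ℝ → ℝ} (hf : ContDiff ℝ 2 f) (hg : ContDiff ℝ 2 g)
    {t s : ℝ} (hpos : 0 < (1 - t ^ 2) * deriv f s ^ 2 + deriv g s ^ 2) :
    HasDerivAt (deriv (Tdeform f g t))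
      (WithLp.toLp 2 (t * deriv (deriv f) s,
        ((1 - t ^ 2) * (deriv f s * deriv (deriv f) s) + deriv g s * deriv (deriv g) s) /
          √((1 - t ^ 2) * deriv f s ^ 2 + deriv g s ^ 2))) s := by
  have hf' : Differentiable ℝ (deriv f) := (hf.deriv' (n := 1)).differentiable one_ne_zero
  have hg' : Differentiable ℝ (deriv g) := (hg.deriv' (n := 1)).differentiable one_ne_zero
  have hspeed : HasDerivAt (fun u => (1 - t ^ 2) * deriv f u ^ 2 + deriv g u ^ 2)
      (2 * ((1 - t ^ 2) * (deriv f s * deriv (deriv f) s) + deriv g s * deriv (deriv g) s)) s := by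
    refine (((hf' s).hasDerivAt.pow 2).const_mul (1 - t ^ 2)).add
      ((hg' s).hasDerivAt.pow 2) |>.congr_deriv ?_
    push_cast
    ring
  rw [funext fun u => (hasDerivAt_Tdeform (hf.differentiable two_ne_zero) hf'.continuous
    hg'.continuous t u).deriv]
  have hsqrt := hspeed.sqrt hpos.ne'
  rw [mul_div_mul_left _ _ two_ne_zero] at hsqrt
  exact ((hf' s).hasDerivAt.const_mul t).toLp_prodMk hsqrt

/-- The squared unsigned curvature of the T-deformed profile curve:
`‖p_t''(s)‖² = t²·f''(s)² / ((1−t²)·f'(s)² + g'(s)²)`, the denominator being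
strictly positive for `|t| < 1`. -/
theorem Tdeform_curvature (k : ℝ) (hk : 0 < k) (f g : ℝ → ℝ)
    (hf : ContDiff ℝ 2 f) (hg : ContDiff ℝ 2 g)
    (hunit : ∀ s ∈ Set.Icc (0 : ℝ) k, deriv f s ^ 2 + deriv g s ^ 2 = 1) :
    ∀ t ∈ Set.Ioo (-1 : ℝ) 1, ∀ s ∈ Set.Icc (0 : ℝ) k,
      0 < (1 - t ^ 2) * deriv f s ^ 2 + deriv g s ^ 2 ∧
      ‖deriv (deriv (Tdeform f g t)) s‖ ^ 2 =
        t ^ 2 * deriv (deriv f) s ^ 2 /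
          ((1 - t ^ 2) * deriv f s ^ 2 + deriv g s ^ 2) := by
  intro t ht s hs
  have ht2 : t ^ 2 < 1 := (sq_lt_one_iff_abs_lt_one t).mpr (abs_lt.mpr ht)
  have hpos := one_sub_sq_mul_sq_add_sq_pos ht2 (hunit s hs)
  refine ⟨hpos, ?_⟩
  have horth := mul_deriv_add_mul_deriv_eq_zero hk (hf.deriv' (n := 1)) (hg.deriv' (n := 1))
    hunit s hs
  rw [(hasDerivAt_deriv_Tdeform hf hg hpos).deriv, WithLp.prod_norm_sq_eq_of_L2]
  have hnum : (1 - t ^ 2) * (deriv f s * deriv (deriv f) s) + deriv g s * deriv (deriv g) s =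
      -(t ^ 2 * (deriv f s * deriv (deriv f) s)) := by linear_combination horth
  simp only [WithLp.toLp_fst, WithLp.toLp_snd, Real.norm_eq_abs, sq_abs, hnum, div_pow,
    Real.sq_sqrt hpos.le]
  rw [eq_div_iff hpos.ne', add_mul, div_mul_cancel₀ _ hpos.ne']
  linear_combination (t ^ 2 * deriv (deriv f) s ^ 2) * hunit s hs
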